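/- arXiv:1001.0348 — 3 statements merged into one kernel-verified Lean document; each statement's English description precedes it below -/
import Mathlib

section
/- For any prime p > 3, the rational number ∑_{k=1}^{p-1} H_k·L_k/k is congruent to 0 modulo p, where L_k denotes the k-th Lucas number. -/
/-- The Lucas numbers. -/
def lucasNum : ℕ → ℤ
  | 0 => 2
  | 1 => 1
  | n + 2 => lucasNum (n + 1) + lucasNum n

/-- `x ≡ y (mod p^m)` for rational numbers: `x - y = p^m * r` with `p ∤ den r`. -/
def ratCong (p m : ℕ) (x y : ℚ) : Prop :=
  ∃ r : ℚ, x - y = (p : ℚ) ^ m * r ∧ ¬ (p ∣ r.den)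

/-!
Write `n = p - 1`. Since `(-1)^k C(n, k) = ∏_{j ≤ k} (1 - p / j)`, one has
`p H_k ≡ 1 - (-1)^k C(n, k) (mod p²)` for `k < p`. Multiplying by the `p`-integral `L_k / k` and
summing, `p · ∑ H_k L_k / k ≡ ∑ (1 - (-1)^k C(n, k)) L_k / k (mod p²)`. By the binomial transform
`∑ (-1)^k C(n, k) x^k / k = ∑_j ((1 - x)^j - 1) / j` at `x = φ` and `x = ψ = 1 - φ`, the right-hand
side is `2 H_n`, which vanishes mod `p²` by Wolstenholme's theorem.
-/

open Finset

theorem sum_Icc_one_eq_sum_range {M : Type*} [AddCommMonoid M] (n : ℕ) (f : ℕ → M) :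
    ∑ k ∈ Icc 1 n, f k = ∑ k ∈ range n, f (k + 1) := by
  rw [← Ico_add_one_right_eq_Icc, sum_Ico_eq_sum_range, add_tsub_cancel_right]
  simp only [add_comm]

theorem sum_range_choose_succ_mul_pow {R : Type*} [CommRing R] (n : ℕ) (y : R) :
    ∑ k ∈ range n, (n.choose (k + 1) : R) * y ^ (k + 1) = (1 + y) ^ n - 1 := by
  rw [add_comm, add_pow, sum_range_succ', eq_sub_iff_add_eq]
  simp [mul_comm]

theorem sum_range_neg_one_pow_mul_choose_mul_pow_div {K : Type*} [Field K] [CharZero K]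
    (n : ℕ) (x : K) :
    ∑ k ∈ range n, (-1) ^ (k + 1) * (n.choose (k + 1) : K) * x ^ (k + 1) / (k + 1) =
      ∑ k ∈ range n, ((1 - x) ^ (k + 1) - 1) / (k + 1) := by
  induction n with
  | zero => simp
  | succ n ih =>
    have hpascal (k : ℕ) : ((n + 1).choose (k + 1) : K) = n.choose k + n.choose (k + 1) := by
      exact_mod_cast Nat.choose_succ_succ' n k
    have hshift (k : ℕ) : (n.choose k : K) / (k + 1) = (n + 1).choose (k + 1) / (n + 1) := by
      rw [div_eq_div_iff (Nat.cast_add_one_ne_zero k) (Nat.cast_add_one_ne_zero n)]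
      exact_mod_cast (Nat.add_one_mul_choose_eq n k).symm.trans (mul_comm _ _) |>.symm
    calc ∑ k ∈ range (n + 1), (-1) ^ (k + 1) * ((n + 1).choose (k + 1) : K) * x ^ (k + 1) / (k + 1)
        = ∑ k ∈ range (n + 1), (-1) ^ (k + 1) * (n.choose (k + 1) : K) * x ^ (k + 1) / (k + 1)
          + ∑ k ∈ range (n + 1), ((n + 1).choose (k + 1) : K) * (-x) ^ (k + 1) / (n + 1) := by
          rw [← sum_add_distrib]
          refine sum_congr rfl fun k _ => ?_
          rw [mul_div_right_comm _ _ ((n : K) + 1), ← hshift, hpascal, neg_pow]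
          ring
      _ = ∑ k ∈ range (n + 1), ((1 - x) ^ (k + 1) - 1) / (k + 1) := by
          rw [sum_range_succ, Nat.choose_succ_self, ← sum_div, sum_range_choose_succ_mul_pow, ih,
            sum_range_succ, ← sub_eq_add_neg]
          simp

theorem neg_one_pow_mul_choose_succ (n k : ℕ) :
    (-1) ^ (k + 1) * (n.choose (k + 1) : ℚ) =
      (1 - (n + 1) / (k + 1)) * ((-1) ^ k * n.choose k) := by
  have hpascal : ((n + 1).choose (k + 1) : ℚ) = n.choose k + n.choose (k + 1) := by
    exact_mod_cast Nat.choose_succ_succ' n k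
  have hmul : ((n + 1) * n.choose k : ℚ) = (n + 1).choose (k + 1) * (k + 1) := by
    exact_mod_cast Nat.add_one_mul_choose_eq n k
  field_simp
  linear_combination (-1) ^ k * ((k + 1) * hpascal + hmul)

theorem two_mul_harmonic_eq (n : ℕ) :
    2 * harmonic n = (n + 1) * ∑ k ∈ range n, (((k + 1) * (n - k) : ℕ) : ℚ)⁻¹ := by
  have hreflect : ∑ k ∈ range n, ((n - k : ℕ) : ℚ)⁻¹ = harmonic n := by
    rw [harmonic, ← sum_range_reflect]
    exact sum_congr rfl fun k hk => by rw [mem_range] at hk; congr 2; omega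
  rw [two_mul]
  nth_rw 2 [← hreflect]
  rw [harmonic, ← sum_add_distrib, mul_sum]
  refine sum_congr rfl fun k hk => ?_
  rw [mem_range] at hk
  have hk' : ((n - k : ℕ) : ℚ) ≠ 0 := Nat.cast_ne_zero.2 (by omega)
  push_cast [Nat.cast_sub hk.le] at hk' ⊢
  field_simp
  ring

open goldenRatio in
theorem lucasNum_cast_eq : ∀ n, (lucasNum n : ℝ) = φ ^ n + ψ ^ n
  | 0 => by norm_num [lucasNum]
  | 1 => by simp [lucasNum, Real.goldenRatio_add_goldenConj]
  | n + 2 => by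
    rw [lucasNum, Int.cast_add, lucasNum_cast_eq (n + 1), lucasNum_cast_eq n]
    linear_combination -φ ^ n * Real.goldenRatio_sq - ψ ^ n * Real.goldenConj_sq

open goldenRatio in
theorem sum_range_one_sub_neg_one_pow_mul_choose_mul_lucasNum (n : ℕ) :
    ∑ k ∈ range n, (1 - (-1) ^ (k + 1) * (n.choose (k + 1) : ℚ)) * lucasNum (k + 1) / (k + 1) =
      2 * harmonic n := by
  apply Rat.cast_injective (α := ℝ)
  have hφ := sum_range_neg_one_pow_mul_choose_mul_pow_div n φ
  have hψ := sum_range_neg_one_pow_mul_choose_mul_pow_div n ψ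
  rw [Real.one_sub_goldenConj] at hφ
  rw [Real.one_sub_goldenRatio] at hψ
  simp only [harmonic, Rat.cast_sum, Rat.cast_mul, Rat.cast_div, Rat.cast_sub, Rat.cast_pow,
    Rat.cast_one, Rat.cast_neg, Rat.cast_natCast, Rat.cast_intCast, Rat.cast_inv, Rat.cast_add,
    Rat.cast_ofNat, lucasNum_cast_eq, mul_sum]
  calc _ = ∑ k ∈ range n, (φ ^ (k + 1) + ψ ^ (k + 1)) / (k + 1)
        - (∑ k ∈ range n, (-1) ^ (k + 1) * (n.choose (k + 1) : ℝ) * φ ^ (k + 1) / (k + 1)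
          + ∑ k ∈ range n, (-1) ^ (k + 1) * (n.choose (k + 1) : ℝ) * ψ ^ (k + 1) / (k + 1)) := by
        rw [← sum_add_distrib, ← sum_sub_distrib]
        exact sum_congr rfl fun k _ => by ring
    _ = _ := by
        rw [hφ, hψ, ← sum_add_distrib, ← sum_sub_distrib]
        exact sum_congr rfl fun k _ => by push_cast; ring

theorem ZMod.sum_eq_sum_range {M : Type*} [AddCommMonoid M] (n : ℕ) [NeZero n] (f : ZMod n → M) :
    ∑ x : ZMod n, f x = ∑ k ∈ range n, f k := by
  rw [← Fin.sum_univ_eq_sum_range (fun k => f k), ← (ZMod.finEquiv n).toEquiv.sum_comp]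
  congr! with i
  obtain ⟨m, rfl⟩ : ∃ m, n = m + 1 := ⟨n - 1, by have := NeZero.ne n; omega⟩
  exact (Fin.cast_val_eq_self i).symm

theorem ZMod.sum_inv_sq_eq_zero {p : ℕ} [Fact p.Prime] (hp3 : 3 < p) :
    ∑ x : ZMod p, (x⁻¹) ^ 2 = 0 :=
  (Equiv.sum_comp (Equiv.inv (ZMod p)) (· ^ 2)).trans
    (FiniteField.sum_pow_lt_card_sub_one _ 2 (by rw [ZMod.card p]; omega))

section pIntegral

variable (p : ℕ) [hp : Fact p.Prime]

def pIntegral : Subring ℚ where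
  carrier := {r | ¬ p ∣ r.den}
  mul_mem' {a b} ha hb h := (hp.out.dvd_mul.1 (h.trans (Rat.mul_den_dvd a b))).elim ha hb
  one_mem' := hp.out.not_dvd_one
  add_mem' {a b} ha hb h := (hp.out.dvd_mul.1 (h.trans (Rat.add_den_dvd a b))).elim ha hb
  zero_mem' := hp.out.not_dvd_one
  neg_mem' := by simp

variable {p}

theorem mem_pIntegral {r : ℚ} : r ∈ pIntegral p ↔ ¬ p ∣ r.den := Iff.rfl

theorem natCast_inv_mem_pIntegral {k : ℕ} (hk : ¬ p ∣ k) : (k : ℚ)⁻¹ ∈ pIntegral p := by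
  rw [mem_pIntegral, Rat.inv_natCast_den]
  split_ifs <;> simp_all

theorem harmonic_mem_pIntegral {n : ℕ} (hn : n < p) : harmonic n ∈ pIntegral p :=
  Subring.sum_mem _ fun k hk => natCast_inv_mem_pIntegral
    (Nat.not_dvd_of_pos_of_lt k.succ_pos (by rw [mem_range] at hk; omega))

-- The cast `ℚ → ZMod p` is `q ↦ q.num / q.den`; it is additive only on `p`-integral arguments.
theorem cast_sum_of_mem_pIntegral {ι : Type*} {s : Finset ι} {f : ι → ℚ}
    (hf : ∀ i ∈ s, f i ∈ pIntegral p) :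
    ((∑ i ∈ s, f i : ℚ) : ZMod p) = ∑ i ∈ s, (f i : ZMod p) := by
  classical
  induction s using Finset.induction_on with
  | empty => simp
  | insert a s ha ih =>
    rw [sum_insert ha, sum_insert ha, ← ih fun i hi => hf i (mem_insert_of_mem hi)]
    apply Rat.cast_add_of_ne_zero <;> rw [ne_eq, ZMod.natCast_eq_zero_iff]
    · exact hf a (mem_insert_self a s)
    · exact Subring.sum_mem _ fun i hi => hf i (mem_insert_of_mem hi)

variable {m : ℕ} {x y z x' y' : ℚ}

theorem ratCong.refl (x : ℚ) : ratCong p m x x := ⟨0, by simp, (pIntegral p).zero_mem⟩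

theorem ratCong.trans (h : ratCong p m x y) (h' : ratCong p m y z) : ratCong p m x z := by
  obtain ⟨r, hr, hrp⟩ := h
  obtain ⟨s, hs, hsp⟩ := h'
  exact ⟨r + s, by linear_combination hr + hs, (pIntegral p).add_mem hrp hsp⟩

theorem ratCong.add (h : ratCong p m x y) (h' : ratCong p m x' y') :
    ratCong p m (x + x') (y + y') := by
  obtain ⟨r, hr, hrp⟩ := h
  obtain ⟨s, hs, hsp⟩ := h'
  exact ⟨r + s, by linear_combination hr + hs, (pIntegral p).add_mem hrp hsp⟩

theorem ratCong.mul_left {c : ℚ} (hc : c ∈ pIntegral p) (h : ratCong p m x y) :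
    ratCong p m (c * x) (c * y) := by
  obtain ⟨r, hr, hrp⟩ := h
  exact ⟨c * r, by linear_combination c * hr, (pIntegral p).mul_mem hc hrp⟩

theorem ratCong.sum {ι : Type*} {s : Finset ι} {f g : ι → ℚ}
    (h : ∀ i ∈ s, ratCong p m (f i) (g i)) : ratCong p m (∑ i ∈ s, f i) (∑ i ∈ s, g i) := by
  classical
  induction s using Finset.induction_on with
  | empty => exact ratCong.refl 0
  | insert a s ha ih =>
    rw [sum_insert ha, sum_insert ha]
    exact (h a (mem_insert_self a s)).add (ih fun i hi => h i (mem_insert_of_mem hi))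

theorem ratCong_add_pow_mul {r : ℚ} (hr : r ∈ pIntegral p) : ratCong p m (x + p ^ m * r) x :=
  ⟨r, by ring, hr⟩

theorem ratCong_zero_of_cast_eq_zero (hx : x ∈ pIntegral p) (h : (x : ZMod p) = 0) :
    ratCong p 1 x 0 := by
  have hden : (x.den : ZMod p) ≠ 0 := by rwa [ne_eq, ZMod.natCast_eq_zero_iff]
  rw [Rat.cast_def, div_eq_zero_iff, or_iff_left hden, ZMod.intCast_zmod_eq_zero_iff_dvd] at h
  obtain ⟨a, ha⟩ := h
  refine ⟨a / x.den, ?_, fun hd => hx (hd.trans ?_)⟩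
  · nth_rw 1 [← Rat.num_div_den x, ha]
    push_cast
    ring
  · exact_mod_cast Rat.den_dvd a x.den

theorem ratCong_succ_mul_iff :
    ratCong p (m + 1) (p * x) (p * y) ↔ ratCong p m x y := by
  have hp0 : (p : ℚ) ≠ 0 := Nat.cast_ne_zero.2 hp.out.ne_zero
  constructor
  · rintro ⟨r, hr, hrp⟩
    exact ⟨r, mul_left_cancel₀ hp0 (by linear_combination hr), hrp⟩
  · rintro ⟨r, hr, hrp⟩
    exact ⟨r, by linear_combination p * hr, hrp⟩

theorem ratCong_mul_harmonic {k : ℕ} (hk : k < p) :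
    ratCong p 2 (p * harmonic k) (1 - (-1) ^ k * ((p - 1).choose k : ℚ)) := by
  induction k with
  | zero => simpa using ratCong.refl (p := p) (m := 2) 0
  | succ k ih =>
    have hinv := natCast_inv_mem_pIntegral (p := p) (Nat.not_dvd_of_pos_of_lt k.succ_pos hk)
    set u : ℚ := 1 - p * ((k + 1 : ℕ) : ℚ)⁻¹
    have hu : u ∈ pIntegral p := sub_mem (one_mem _) (mul_mem (natCast_mem _ p) hinv)
    have hH : p * harmonic (k + 1)
        = u * (p * harmonic k) + p * ((k + 1 : ℕ) : ℚ)⁻¹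
          + p ^ 2 * (harmonic k * ((k + 1 : ℕ) : ℚ)⁻¹) := by
      rw [harmonic_succ]; ring
    have hc : 1 - (-1) ^ (k + 1) * ((p - 1).choose (k + 1) : ℚ)
        = u * (1 - (-1) ^ k * (p - 1).choose k) + p * ((k + 1 : ℕ) : ℚ)⁻¹ := by
      rw [neg_one_pow_mul_choose_succ, Nat.cast_pred hp.out.pos, sub_add_cancel]
      simp only [u]; push_cast; ring
    rw [hH, hc]
    exact (ratCong_add_pow_mul (mul_mem (harmonic_mem_pIntegral (by omega)) hinv)).trans
      (((ih (by omega)).mul_left hu).add (ratCong.refl _))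

theorem harmonic_pred_ratCong_zero (hp3 : 3 < p) : ratCong p 2 (harmonic (p - 1)) 0 := by
  have hmem : ∀ k ∈ range (p - 1), (((k + 1) * (p - 1 - k) : ℕ) : ℚ)⁻¹ ∈ pIntegral p := by
    refine fun k hk => natCast_inv_mem_pIntegral fun h => ?_
    rw [mem_range] at hk
    rcases hp.out.dvd_mul.1 h with h | h <;> exact Nat.not_dvd_of_pos_of_lt (by omega) (by omega) h
  have hsq : ∑ k ∈ range (p - 1), (((k + 1 : ℕ) : ZMod p)⁻¹) ^ 2 = 0 := by
    have h := sum_range_succ' (fun k => ((k : ZMod p)⁻¹) ^ 2) (p - 1)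
    rw [Nat.sub_add_cancel hp.out.one_le, ← ZMod.sum_eq_sum_range p (fun x => x⁻¹ ^ 2),
      ZMod.sum_inv_sq_eq_zero hp3] at h
    simpa using h.symm
  -- Modulo `p`, `(k + 1) * (p - 1 - k) ≡ -(k + 1) ^ 2`.
  have hsum : ratCong p 1 (∑ k ∈ range (p - 1), (((k + 1) * (p - 1 - k) : ℕ) : ℚ)⁻¹) 0 := by
    refine ratCong_zero_of_cast_eq_zero (Subring.sum_mem _ hmem) ?_
    rw [cast_sum_of_mem_pIntegral hmem, ← neg_eq_zero, ← sum_neg_distrib, ← hsq]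
    refine sum_congr rfl fun k hk => ?_
    rw [mem_range] at hk
    rw [Rat.cast_inv_nat, Nat.cast_mul, show p - 1 - k = p - (k + 1) by omega,
      Nat.cast_sub (by omega), ZMod.natCast_self, zero_sub, mul_neg, inv_neg, neg_neg, ← sq,
      inv_pow]
  have h2 : ratCong p 2 (2 * harmonic (p - 1)) 0 := by
    rw [two_mul_harmonic_eq, Nat.cast_pred hp.out.pos, sub_add_cancel, ← mul_zero (p : ℚ)]
    exact ratCong_succ_mul_iff.2 hsum
  have hinv : ((2 : ℕ) : ℚ)⁻¹ ∈ pIntegral p :=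
    natCast_inv_mem_pIntegral (Nat.not_dvd_of_pos_of_lt two_pos (by omega))
  simpa using h2.mul_left hinv

end pIntegral

theorem stmt3 (p : ℕ) (hp : p.Prime) (hp3 : 3 < p) :
    ratCong p 1 (∑ k ∈ Finset.Icc 1 (p - 1), harmonic k * (lucasNum k : ℚ) / k) 0 := by
  have := Fact.mk hp
  have hcong : ratCong p 2 (p * ∑ k ∈ Icc 1 (p - 1), harmonic k * (lucasNum k : ℚ) / k)
      (2 * harmonic (p - 1)) := by
    rw [sum_Icc_one_eq_sum_range, mul_sum,
      ← sum_range_one_sub_neg_one_pow_mul_choose_mul_lucasNum]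
    refine ratCong.sum fun k hk => ?_
    rw [mem_range] at hk
    have hL : (lucasNum (k + 1) : ℚ) * ((k + 1 : ℕ) : ℚ)⁻¹ ∈ pIntegral p :=
      mul_mem (intCast_mem _ _) (natCast_inv_mem_pIntegral
        (Nat.not_dvd_of_pos_of_lt k.succ_pos (by omega)))
    convert (ratCong_mul_harmonic (by omega : k + 1 < p)).mul_left hL using 1 <;> push_cast <;> ring
  have hwol := (harmonic_pred_ratCong_zero hp3).mul_left (ofNat_mem (pIntegral p) 2)
  rw [mul_zero, ← mul_zero (p : ℚ)] at hwol
  exact ratCong_succ_mul_iff.1 (hcong.trans hwol)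
end

section
/- For any prime p > 3, ∑_{k=0}^{p-1} (−1)^k·χ(k)·k·H_k ≡ (1 − (p/3))/2 (mod p) as rational numbers, where χ(k) is the Jacobi symbol (k/3) and (p/3) is the Jacobi symbol of p modulo 3. -/
open Finset

/-- The localization `ℤ_(p)`: rationals whose denominator is prime to `p`. -/
def pIntegers (p : ℕ) [hp : Fact p.Prime] : Subring ℚ where
  carrier := {q | ¬ p ∣ q.den}
  zero_mem' := by simp [hp.out.not_dvd_one]
  one_mem' := by simpa using hp.out.not_dvd_one
  add_mem' {a b} ha hb h := (hp.out.dvd_mul.mp (h.trans (Rat.add_den_dvd a b))).elim ha hb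
  mul_mem' {a b} ha hb h := (hp.out.dvd_mul.mp (h.trans (Rat.mul_den_dvd a b))).elim ha hb
  neg_mem' := by simp

section pIntegers

variable {p : ℕ} [Fact p.Prime]

theorem mem_pIntegers {q : ℚ} : q ∈ pIntegers p ↔ ¬ p ∣ q.den := Iff.rfl

theorem inv_natCast_mem_pIntegers {j : ℕ} (hj : ¬ p ∣ j) : (j : ℚ)⁻¹ ∈ pIntegers p := by
  rw [mem_pIntegers, Rat.inv_natCast_den, if_neg (by rintro rfl; exact hj (dvd_zero p))]
  exact hj

end pIntegers

namespace ratCong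

variable {p m : ℕ} [Fact p.Prime] {x y x' y' : ℚ}

theorem iff_div_mem : ratCong p m x y ↔ (x - y) / p ^ m ∈ pIntegers p := by
  have hp : (p : ℚ) ^ m ≠ 0 := pow_ne_zero _ (Nat.cast_ne_zero.mpr (Fact.out : p.Prime).ne_zero)
  constructor
  · rintro ⟨r, hr, hden⟩
    rwa [hr, mul_div_cancel_left₀ _ hp]
  · exact fun h => ⟨_, (mul_div_cancel₀ _ hp).symm, h⟩

theorem refl_s9 (x : ℚ) : ratCong p m x x :=
  iff_div_mem.mpr (by simp [zero_mem])

theorem add_s9 (h : ratCong p m x y) (h' : ratCong p m x' y') : ratCong p m (x + x') (y + y') := by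
  rw [iff_div_mem] at *
  convert add_mem h h' using 1
  ring

theorem sub (h : ratCong p m x y) (h' : ratCong p m x' y') : ratCong p m (x - x') (y - y') := by
  rw [iff_div_mem] at *
  convert sub_mem h h' using 1
  ring

theorem mul_left_s9 {z : ℚ} (hz : z ∈ pIntegers p) (h : ratCong p m x y) :
    ratCong p m (z * x) (z * y) := by
  rw [iff_div_mem] at *
  convert mul_mem hz h using 1
  ring

theorem sum_s9 {ι : Type*} (s : Finset ι) {f g : ι → ℚ}
    (h : ∀ i ∈ s, ratCong p m (f i) (g i)) :
    ratCong p m (∑ i ∈ s, f i) (∑ i ∈ s, g i) := by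
  rw [iff_div_mem, ← sum_sub_distrib, sum_div]
  exact sum_mem fun i hi => iff_div_mem.mp (h i hi)

end ratCong

theorem ZMod.natCast_choose_pred {p i : ℕ} (hp : p.Prime) (hi : i < p) :
    ((p - 1).choose i : ZMod p) = (-1) ^ i := by
  induction i with
  | zero => simp
  | succ i ih =>
    have hpascal : (p - 1).choose i + (p - 1).choose (i + 1) = p.choose (i + 1) := by
      rw [← Nat.choose_succ_succ', Nat.sub_add_cancel hp.one_le]
    have hdvd : ((p.choose (i + 1) : ℕ) : ZMod p) = 0 :=
      (ZMod.natCast_eq_zero_iff _ _).mpr (hp.dvd_choose_self i.succ_ne_zero hi)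
    rw [← hpascal, Nat.cast_add, ih (by omega)] at hdvd
    linear_combination hdvd

theorem ratCong_inv_succ_choose {p i : ℕ} [hp : Fact p.Prime] (hi : i + 1 < p) :
    ratCong p 1 ((i + 1 : ℚ)⁻¹) ((-1) ^ i * p.choose (i + 1) / p) := by
  obtain ⟨m, hm⟩ : (p : ℤ) ∣ 1 - (-1) ^ i * (p - 1).choose i := by
    rw [← ZMod.intCast_zmod_eq_zero_iff_dvd]
    push_cast
    rw [ZMod.natCast_choose_pred hp.out (by omega), ← mul_pow]
    norm_num
  have hchoose : (p : ℚ) * (p - 1).choose i = p.choose (i + 1) * (i + 1) := by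
    exact_mod_cast Nat.sub_add_cancel hp.out.one_le ▸ Nat.add_one_mul_choose_eq (p - 1) i
  have hp0 : (p : ℚ) ≠ 0 := Nat.cast_ne_zero.mpr hp.out.ne_zero
  rw [ratCong.iff_div_mem, pow_one]
  convert mul_mem (intCast_mem _ m) (inv_natCast_mem_pIntegers (p := p) (j := i + 1)
    (Nat.not_dvd_of_pos_of_lt i.succ_pos hi)) using 1
  push_cast
  have hm' : (1 : ℚ) - (-1) ^ i * (p - 1).choose i = p * m := by exact_mod_cast hm
  field_simp
  linear_combination (p : ℚ) * hm' + (-1) ^ i * hchoose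

theorem ratCong_sum_mul_inv_succ_choose {p : ℕ} [Fact p.Prime] (w : ℕ → ℚ)
    (hw : ∀ i, w i ∈ pIntegers p) :
    ratCong p 1 (∑ i ∈ range (p - 1), w i * ((i : ℚ) + 1)⁻¹)
      ((∑ i ∈ range (p - 1), (-1) ^ i * w i * p.choose (i + 1)) / p) := by
  rw [sum_div]
  refine ratCong.sum_s9 _ fun i hi => ?_
  have hi' : i + 1 < p := by rw [mem_range] at hi; omega
  convert (ratCong_inv_succ_choose hi').mul_left_s9 (hw i) using 1
  ring

theorem sum_range_neg_one_pow_mul_choose_succ {n : ℕ} (hn : Odd n) :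
    ∑ i ∈ range (n - 1), ((-1) ^ i * n.choose (i + 1) : ℤ) = 0 := by
  obtain ⟨k, rfl⟩ := hn
  have h := Int.alternating_sum_range_choose_of_ne (n := 2 * k + 1) (by omega)
  rw [sum_range_succ, sum_range_succ'] at h
  simpa [pow_succ, Odd.neg_one_pow] using h

theorem ratCong_harmonic_pred {p : ℕ} [hp : Fact p.Prime] (hp2 : p ≠ 2) :
    ratCong p 1 (harmonic (p - 1)) 0 := by
  have h := ratCong_sum_mul_inv_succ_choose (p := p) (fun _ => 1) (fun _ => one_mem _)
  have hsum : ∑ i ∈ range (p - 1), ((-1) ^ i * p.choose (i + 1) : ℚ) = 0 := by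
    exact_mod_cast sum_range_neg_one_pow_mul_choose_succ (hp.out.odd_of_ne_two hp2)
  simpa [hsum, harmonic] using h

theorem jacobiSym_three (a : ℤ) :
    jacobiSym a 3 = if a % 3 = 0 then 0 else if a % 3 = 1 then 1 else -1 := by
  rw [jacobiSym.mod_left]
  push_cast
  rcases (by omega : a % 3 = 0 ∨ a % 3 = 1 ∨ a % 3 = 2) with h | h | h <;> rw [h]
  · simp [jacobiSym.zero_left]
  · simp
  · rw [jacobiSym.at_two (by decide)]; decide

theorem jacobiSym_three_add_succ (a : ℤ) :
    jacobiSym a 3 + jacobiSym (a + 1) 3 = -jacobiSym (a + 2) 3 := by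
  simp only [jacobiSym_three]
  split_ifs <;> omega

theorem sum_range_choose_mul_of_add_eq_mul {R : Type*} [CommRing R] (u : ℕ → R) (c : R)
    (hu : ∀ b, u b + u (b + 1) = c * u (b + 2)) (n a : ℕ) :
    ∑ j ∈ range (n + 1), (n.choose j : R) * u (a + j) = c ^ n * u (a + 2 * n) := by
  induction n generalizing a with
  | zero => simp
  | succ n ih =>
    rw [sum_choose_succ_mul (fun j _ => u (a + j)) n]
    simp only [← add_assoc, add_right_comm a _ 1, ih]
    rw [show a + 1 + 2 * n = a + 2 * n + 1 by ring, ← mul_add, hu]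
    ring_nf

theorem sum_range_choose_succ_mul_jacobiSym_three {n : ℕ} (hn : Odd n) :
    ∑ i ∈ range (n - 1), (n.choose (i + 1) * jacobiSym (i + 1 : ℕ) 3 : ℤ) = 0 := by
  have h := sum_range_choose_mul_of_add_eq_mul (fun b => jacobiSym b 3) (-1)
    (fun b => by push_cast; linear_combination jacobiSym_three_add_succ b) n 0
  obtain ⟨k, rfl⟩ := hn
  rw [sum_range_succ, sum_range_succ'] at h
  simp only [Nat.add_sub_cancel, zero_add, Odd.neg_one_pow ⟨k, rfl⟩] at h ⊢
  have h2 : jacobiSym (2 * (2 * k + 1) : ℕ) 3 = - jacobiSym (2 * k + 1 : ℕ) 3 := by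
    simp only [jacobiSym_three]; push_cast; split_ifs <;> omega
  have h0 : jacobiSym ((0 : ℕ) : ℤ) 3 = 0 := by simp [jacobiSym_three]
  simp only [h2, h0, Nat.choose_self, Nat.choose_zero_right, Nat.cast_one, one_mul, mul_zero,
    add_zero, mul_neg] at h
  linarith

theorem sum_range_succ_mul_natCast {R : Type*} [CommRing R] (g : ℕ → R) (h0 : g 0 = 0)
    (hg : ∀ n, g n - g (n + 1) + g (n + 2) = 0) (n : ℕ) :
    ∑ k ∈ range (n + 1), g k * k = (n + 1) * g n - n * g (n + 1) := by
  induction n with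
  | zero => simp [h0]
  | succ n ih =>
    rw [sum_range_succ, ih]
    push_cast
    linear_combination (n + 1 : R) * hg n

theorem sum_range_succ_mul_natCast_mul_harmonic (g : ℕ → ℚ) (h0 : g 0 = 0)
    (hg : ∀ n, g n - g (n + 1) + g (n + 2) = 0) (n : ℕ) :
    ∑ k ∈ range (n + 1), g k * k * harmonic k =
      harmonic n * ((n + 1) * g n - n * g (n + 1)) + g n
        - ∑ i ∈ range n, g (i + 1) * ((i : ℚ) + 1)⁻¹ := by
  have h := sum_range_by_parts harmonic (fun k => g k * k) (n + 1)
  simp only [smul_eq_mul, Nat.add_sub_cancel, harmonic_succ, add_sub_cancel_left,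
    sum_range_succ_mul_natCast g h0 hg] at h
  have hterm : ∀ i : ℕ, ((i + 1 : ℕ) : ℚ)⁻¹ * ((i + 1) * g i - i * g (i + 1)) =
      (g i - g (i + 1)) + g (i + 1) * ((i : ℚ) + 1)⁻¹ := fun i => by
    push_cast
    field_simp
    ring
  rw [sum_congr rfl fun i _ => hterm i, sum_add_distrib, sum_range_sub', h0] at h
  rw [sum_congr rfl fun k _ => mul_comm _ (harmonic k), h]
  ring

def signedJacobiThree (k : ℕ) : ℚ := (-1) ^ k * jacobiSym k 3

namespace signedJacobiThree

theorem zero : signedJacobiThree 0 = 0 := by simp [signedJacobiThree, jacobiSym_three]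

theorem sub_add (k : ℕ) :
    signedJacobiThree k - signedJacobiThree (k + 1) + signedJacobiThree (k + 2) = 0 := by
  have h : (jacobiSym k 3 : ℚ) + jacobiSym (k + 1 : ℕ) 3 = -jacobiSym (k + 2 : ℕ) 3 := by
    exact_mod_cast jacobiSym_three_add_succ k
  simp only [signedJacobiThree, pow_succ]
  linear_combination (-1 : ℚ) ^ k * h

theorem mem_pIntegers {p : ℕ} [Fact p.Prime] (k : ℕ) : signedJacobiThree k ∈ pIntegers p := by
  simpa [signedJacobiThree] using intCast_mem (pIntegers p) ((-1) ^ k * jacobiSym k 3)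

theorem pred {p : ℕ} (hp : Odd p) (hp3 : ¬ 3 ∣ p) :
    signedJacobiThree (p - 1) = (1 - jacobiSym p 3) / 2 := by
  obtain ⟨m, rfl⟩ := hp
  have hsign : (-1 : ℚ) ^ (2 * m + 1 - 1) = 1 := Even.neg_one_pow ⟨m, by omega⟩
  simp only [signedJacobiThree, hsign, jacobiSym_three]
  push_cast
  split_ifs <;> norm_num <;> omega

theorem ratCong_sum_mul_inv_succ_eq_zero {p : ℕ} [hp : Fact p.Prime] (hp2 : p ≠ 2) :
    ratCong p 1 (∑ i ∈ range (p - 1), signedJacobiThree (i + 1) * ((i : ℚ) + 1)⁻¹) 0 := by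
  have h := ratCong_sum_mul_inv_succ_choose (p := p) _ fun i => mem_pIntegers (i + 1)
  have hsum : ∑ i ∈ range (p - 1), (p.choose (i + 1) * jacobiSym (i + 1 : ℕ) 3 : ℚ) = 0 :=
    mod_cast sum_range_choose_succ_mul_jacobiSym_three (hp.out.odd_of_ne_two hp2)
  have hnum :
      ∑ i ∈ range (p - 1), (-1) ^ i * signedJacobiThree (i + 1) * p.choose (i + 1) = 0 := by
    rw [← neg_eq_zero, ← sum_neg_distrib]
    refine (sum_congr rfl fun i _ => ?_).trans hsum
    have hs : (-1 : ℚ) ^ i * (-1) ^ (i + 1) = -1 := by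
      rw [← pow_add]; exact Odd.neg_one_pow ⟨i, by ring⟩
    simp only [signedJacobiThree]
    linear_combination -(p.choose (i + 1) * jacobiSym (i + 1 : ℕ) 3 : ℚ) * hs
  rwa [hnum, zero_div] at h

end signedJacobiThree

theorem stmt9 (p : ℕ) (hp : p.Prime) (hp3 : 3 < p) :
    ratCong p 1
      (∑ k ∈ Finset.range p, (-1 : ℚ) ^ k * (jacobiSym k 3 : ℚ) * k * harmonic k)
      ((1 - (jacobiSym p 3 : ℚ)) / 2) := by
  have := Fact.mk hp
  have hp2 : p ≠ 2 := by omega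
  have h3 : ¬ 3 ∣ p := fun h => by
    have := (Nat.prime_dvd_prime_iff_eq Nat.prime_three hp).mp h; omega
  obtain ⟨n, rfl⟩ : ∃ n, p = n + 1 := ⟨p - 1, by omega⟩
  have hG : (n + 1 : ℚ) * signedJacobiThree n - n * signedJacobiThree (n + 1) ∈
      pIntegers (n + 1) :=
    sub_mem (mul_mem (add_mem (natCast_mem _ n) (one_mem _)) (signedJacobiThree.mem_pIntegers n))
      (mul_mem (natCast_mem _ n) (signedJacobiThree.mem_pIntegers _))
  have hH := ratCong_harmonic_pred hp2
  have hT := signedJacobiThree.ratCong_sum_mul_inv_succ_eq_zero hp2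
  rw [Nat.add_sub_cancel] at hH hT
  convert ((hH.mul_left_s9 hG).add_s9 (ratCong.refl_s9 (signedJacobiThree n))).sub hT using 1
  · exact (sum_range_succ_mul_natCast_mul_harmonic _ signedJacobiThree.zero
      signedJacobiThree.sub_add n).trans (by ring)
  · rw [← signedJacobiThree.pred (hp.odd_of_ne_two hp2) h3, Nat.add_sub_cancel]
    ring
end

section
/- Let p be an odd prime. For every integer k with 0 ≤ k ≤ p−1, we have (−1)^k·C(p−1, k) ≡ 1 − p·H_k (mod p²) as rational numbers, where C(p−1,k) is the binomial coefficient. -/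
/-!
Since `(-1)^k * C(p-1, k) = ∏_{j=1}^k (1 - p/j)` and every `1/j` with `j < p` is `p`-integral,
expanding the product modulo `p²` leaves only `1 - p * ∑_{j=1}^k 1/j = 1 - p * H_k`.
-/

open Finset

theorem Subring.exists_prod_one_sub_mul_eq {R ι : Type*} [CommRing R] (S : Subring R) {a : R}
    (ha : a ∈ S) (s : Finset ι) {x : ι → R} (hx : ∀ i ∈ s, x i ∈ S) :
    ∃ r ∈ S, ∏ i ∈ s, (1 - a * x i) = 1 - a * ∑ i ∈ s, x i + a ^ 2 * r := by
  classical
  induction s using Finset.induction_on with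
  | empty => exact ⟨0, S.zero_mem, by simp⟩
  | insert i s hi ih =>
    obtain ⟨r, hr, hprod⟩ := ih fun j hj ↦ hx j (mem_insert_of_mem hj)
    have hxi := hx i (mem_insert_self i s)
    refine ⟨(1 - a * x i) * r + x i * ∑ j ∈ s, x j, ?_, ?_⟩
    · have hsum := S.sum_mem fun j hj ↦ hx j (mem_insert_of_mem hj)
      exact S.add_mem (S.mul_mem (S.sub_mem S.one_mem (S.mul_mem ha hxi)) hr) (S.mul_mem hxi hsum)
    · rw [prod_insert hi, sum_insert hi, hprod]
      ring

theorem neg_one_pow_mul_choose_eq_prod {K : Type*} [Field K] [CharZero K] (n k : ℕ) :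
    (-1 : K) ^ k * n.choose k = ∏ j ∈ range k, (1 - (n + 1 : K) / (j + 1)) := by
  induction k with
  | zero => simp
  | succ k ih =>
    have hrec : (n.choose (k + 1) : K) * (k + 1) = n.choose k * (n - k) := by
      rcases le_or_gt k n with hkn | hnk
      · have := congrArg (Nat.cast : ℕ → K) (Nat.choose_succ_right_eq n k)
        push_cast [Nat.cast_sub hkn] at this
        exact this
      · simp [Nat.choose_eq_zero_of_lt hnk, Nat.choose_eq_zero_of_lt (hnk.trans k.lt_succ_self)]
    rw [prod_range_succ, ← ih]
    field_simp
    linear_combination (-(-1 : K) ^ k) * hrec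

theorem Rat.inv_natCast_mem_padicValuation_integer {p : ℕ} [Fact p.Prime] {n : ℕ} (hn : ¬ p ∣ n) :
    (n : ℚ)⁻¹ ∈ (Rat.padicValuation p).integer := by
  have hn0 : n ≠ 0 := by rintro rfl; exact hn (dvd_zero p)
  rw [Valuation.mem_integer_iff, Rat.padicValuation_le_one_iff, Rat.inv_natCast_den, if_neg hn0]
  exact hn

theorem stmt17_general (p : ℕ) (hp : p.Prime) (k : ℕ) (hk : k ≤ p - 1) :
    ratCong p 2 ((-1 : ℚ) ^ k * (Nat.choose (p - 1) k : ℚ)) (1 - p * harmonic k) := by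
  have := Fact.mk hp
  have hinv_mem : ∀ j ∈ range k, ((j + 1 : ℕ) : ℚ)⁻¹ ∈ (Rat.padicValuation p).integer :=
    fun j hj ↦ Rat.inv_natCast_mem_padicValuation_integer
      (Nat.not_dvd_of_pos_of_lt j.succ_pos (by grind))
  obtain ⟨r, hr, hprod⟩ :=
    Subring.exists_prod_one_sub_mul_eq _ (natCast_mem _ p) (range k) hinv_mem
  refine ⟨r, ?_, Rat.padicValuation_le_one_iff.mp hr⟩
  rw [neg_one_pow_mul_choose_eq_prod, Nat.cast_pred hp.pos, sub_add_cancel]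
  simp_rw [div_eq_mul_inv, ← Nat.cast_succ]
  rw [hprod, harmonic]
  ring

theorem stmt17 (p : ℕ) (hp : p.Prime) (hodd : Odd p) (k : ℕ) (hk : k ≤ p - 1) :
    ratCong p 2 ((-1 : ℚ) ^ k * (Nat.choose (p - 1) k : ℚ)) (1 - p * harmonic k) :=
  stmt17_general p hp k hk
end
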